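/- arXiv:0802.0940 — 6 statements merged into one kernel-verified Lean document; each statement's English description precedes it below -/
import Mathlib

section
/- Let R be a commutative ring, N a natural number, A an N×N diagonal matrix over R with diagonal entries a_1,…,a_N, and B an N×N matrix over R with zero diagonal (B_{ii}=0 for all i). Then det(A+B) = Σ_{K ⊆ {1,…,N}} (Π_{i∈K} a_i) · det(B_{K̂}), where B_{K̂} denotes the matrix obtained from B by deleting the rows and columns whose indices lie in K, and the determinant of the empty (0×0) matrix is 1. -/
/-!
The determinant is multilinear in the rows, so expanding each row of `diagonal a + B` as
`a i • e i + B i` writes `det (diagonal a + B)` as a sum over the set `K` of rows taken from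
the diagonal part. Factoring `a i` out of those rows leaves unit rows on `K`, and a block
decomposition reduces that determinant to the principal minor of `B` on `Kᶜ`.
-/

open Finset

namespace Matrix

variable {n R : Type*} [Fintype n] [DecidableEq n] [CommRing R]

theorem det_piecewise_row_diagonal (s : Finset n) (a : n → R) (B : Matrix n n R) :
    det (of (s.piecewise B.row (diagonal a).row)) =
      (∏ i ∈ sᶜ, a i) * (B.submatrix (↑) (↑) : Matrix s s R).det := by
  have hrows : of (s.piecewise B.row (diagonal a).row) =
      diagonal (fun i => if i ∈ sᶜ then a i else 1) *
        of (s.piecewise B.row (1 : Matrix n n R).row) := by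
    ext i j
    by_cases hi : i ∈ s <;> simp [diagonal_mul, hi, diagonal_apply, one_apply]
  rw [hrows, det_mul, det_diagonal, det_piecewise_one_eq_submatrix_det, prod_ite_mem,
    univ_inter]

theorem det_diagonal_add_eq_sum (a : n → R) (B : Matrix n n R) :
    det (diagonal a + B) =
      ∑ K : Finset n, (∏ i ∈ K, a i) * (B.submatrix (↑) (↑) : Matrix ↥Kᶜ ↥Kᶜ R).det := by
  calc det (diagonal a + B)
      = ∑ K : Finset n, det (of (K.piecewise (diagonal a).row B.row)) :=
        detRowAlternating.toMultilinearMap.map_add_univ (diagonal a).row B.row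
    _ = _ := by
      refine sum_congr rfl fun K _ => ?_
      rw [← piecewise_compl, det_piecewise_row_diagonal, compl_compl]

end Matrix

theorem stmt0_general {R : Type*} [CommRing R] {N : ℕ} (a : Fin N → R)
    (B : Matrix (Fin N) (Fin N) R) :
    (Matrix.diagonal a + B).det =
      ∑ K : Finset (Fin N), (∏ i ∈ K, a i) *
        (B.submatrix (fun i : {x : Fin N // x ∈ Kᶜ} => (i : Fin N))
          (fun j : {x : Fin N // x ∈ Kᶜ} => (j : Fin N))).det :=
  Matrix.det_diagonal_add_eq_sum a B

/-- determinant expansion `det(A+B) = Σ_K (Π_{i∈K} a_i) det(B_{K̂})`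
for `A` diagonal and `B` with zero diagonal. -/
theorem stmt0 {R : Type*} [CommRing R] {N : ℕ} (a : Fin N → R)
    (B : Matrix (Fin N) (Fin N) R) (hB : ∀ i, B i i = 0) :
    (Matrix.diagonal a + B).det =
      ∑ K : Finset (Fin N), (∏ i ∈ K, a i) *
        (B.submatrix (fun i : {x : Fin N // x ∈ Kᶜ} => (i : Fin N))
          (fun j : {x : Fin N // x ∈ Kᶜ} => (j : Fin N))).det :=
  stmt0_general a B
end

section
/- Let A be a real N×N diagonal matrix whose diagonal entries are all nonnegative, and let B be a real N×N antisymmetric matrix (Bᵀ = −B). Then det(A+B) ≥ 0. -/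
/-!
Write `M = diagonal a + B`. Skew-symmetry of `B` kills its quadratic form, so
`vᵀ M v = ∑ aᵢ vᵢ² ≥ 0`. A real matrix whose quadratic form is positive definite is
invertible, and so is every matrix on the segment from `1` to it; the determinant therefore
cannot change sign along that segment and stays positive. The semidefinite case follows by
letting `ε → 0⁺` in `det (M + ε • 1) > 0`.
-/

open Matrix Filter Topology

namespace Matrix

variable {n : Type*} [Fintype n]

theorem dotProduct_self_pos_of_ne_zero {v : n → ℝ} (hv : v ≠ 0) : 0 < v ⬝ᵥ v := by
  simpa using dotProduct_self_star_pos_iff.mpr hv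

theorem dotProduct_mulVec_self_eq_zero_of_transpose_eq_neg {B : Matrix n n ℝ} (hB : Bᵀ = -B)
    (v : n → ℝ) : v ⬝ᵥ (B *ᵥ v) = 0 := by
  have h : v ⬝ᵥ (B *ᵥ v) = -(v ⬝ᵥ (B *ᵥ v)) := by
    conv_lhs => rw [dotProduct_mulVec, ← mulVec_transpose, hB, dotProduct_comm]
    simp [neg_mulVec]
  linarith

variable [DecidableEq n]

theorem det_ne_zero_of_forall_dotProduct_mulVec_pos {M : Matrix n n ℝ}
    (hM : ∀ v ≠ 0, 0 < v ⬝ᵥ (M *ᵥ v)) : M.det ≠ 0 := by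
  intro hdet
  obtain ⟨v, hv, hMv⟩ := exists_mulVec_eq_zero_iff.mpr hdet
  simpa [hMv] using hM v hv

theorem det_pos_of_forall_dotProduct_mulVec_pos {M : Matrix n n ℝ}
    (hM : ∀ v ≠ 0, 0 < v ⬝ᵥ (M *ᵥ v)) : 0 < M.det := by
  set path : ℝ → Matrix n n ℝ := fun t => (1 - t) • (1 : Matrix n n ℝ) + t • M
  have hpath : ∀ t ∈ Set.Icc (0 : ℝ) 1, (path t).det ≠ 0 := by
    rintro t ⟨ht₀, ht₁⟩
    refine det_ne_zero_of_forall_dotProduct_mulVec_pos fun v hv => ?_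
    have hquad : v ⬝ᵥ (path t *ᵥ v) = (1 - t) * (v ⬝ᵥ v) + t * (v ⬝ᵥ (M *ᵥ v)) := by
      simp [path, add_mulVec, smul_mulVec, dotProduct_add, dotProduct_smul]
    rw [hquad]
    rcases ht₁.lt_or_eq with ht_lt | rfl
    · exact add_pos_of_pos_of_nonneg
        (mul_pos (sub_pos.2 ht_lt) (dotProduct_self_pos_of_ne_zero hv))
        (mul_nonneg ht₀ (hM v hv).le)
    · simpa using hM v hv
  have hcont : Continuous fun t => (path t).det := by fun_prop
  have hpath₀ : (path 0).det = 1 := by simp [path]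
  have hpath₁ : (path 1).det = M.det := by simp [path]
  by_contra! hle
  have hneg : M.det < 0 := hle.lt_of_ne (hpath₁ ▸ hpath 1 ⟨zero_le_one, le_rfl⟩)
  have hzero_mem : (0 : ℝ) ∈ Set.Icc (path 1).det (path 0).det := by
    rw [hpath₀, hpath₁]
    exact ⟨hneg.le, zero_le_one⟩
  obtain ⟨t, ht, hzero⟩ := intermediate_value_Icc' zero_le_one hcont.continuousOn hzero_mem
  exact hpath t ht hzero

theorem det_nonneg_of_forall_dotProduct_mulVec_nonneg {M : Matrix n n ℝ}
    (hM : ∀ v, 0 ≤ v ⬝ᵥ (M *ᵥ v)) : 0 ≤ M.det := by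
  have hpos : ∀ ε : ℝ, 0 < ε → 0 < (M + ε • (1 : Matrix n n ℝ)).det := fun ε hε =>
    det_pos_of_forall_dotProduct_mulVec_pos fun v hv => by
      simpa [add_mulVec, smul_mulVec, dotProduct_add, dotProduct_smul] using
        add_pos_of_nonneg_of_pos (hM v) (mul_pos hε (dotProduct_self_pos_of_ne_zero hv))
  set perturbed : ℝ → ℝ := fun ε => (M + ε • (1 : Matrix n n ℝ)).det
  have hcont : Continuous perturbed := by fun_prop
  have hlim : Tendsto perturbed (𝓝[>] 0) (𝓝 M.det) := by
    simpa [perturbed] using (hcont.tendsto 0).mono_left nhdsWithin_le_nhds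
  refine ge_of_tendsto hlim ?_
  filter_upwards [self_mem_nhdsWithin] with ε hε
  exact (hpos ε hε).le

end Matrix

/-- positivity of `det(A+B)` for `A` diagonal with nonnegative entries
and `B` real antisymmetric. -/
theorem stmt1 {N : ℕ} (a : Fin N → ℝ) (ha : ∀ i, 0 ≤ a i)
    (B : Matrix (Fin N) (Fin N) ℝ) (hB : Bᵀ = -B) :
    0 ≤ (Matrix.diagonal a + B).det := by
  refine det_nonneg_of_forall_dotProduct_mulVec_nonneg fun v => ?_
  rw [add_mulVec, dotProduct_add, dotProduct_mulVec_self_eq_zero_of_transpose_eq_neg hB, add_zero]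
  exact Finset.sum_nonneg fun i _ => by
    simpa [mulVec_diagonal, mul_left_comm] using mul_nonneg (ha i) (mul_self_nonneg (v i))
end

section
/- For every Schwartz function g : ℝ^D → ℂ, every x ∈ ℝ^D and every index μ ∈ {1,…,D}, the iterated integrals below converge and satisfy: (2π)^{−D} ∫_{ℝ^D} [ ∫_{ℝ^D} (x_μ + ½(Θk)_μ) g(x+y) e^{i⟨k,y⟩} dy ] dk = x_μ g(x) + (i/2) Σ_ν Θ_{μν} ∂_ν g(x), and (2π)^{−D} ∫_{ℝ^D} [ ∫_{ℝ^D} (x+y)_μ g(x + ½Θk) e^{i⟨k,y⟩} dk ] dy = x_μ g(x) − (i/2) Σ_ν Θ_{μν} ∂_ν g(x). These identities express the Moyal products x^μ ⋆ g and g ⋆ x^μ of the coordinate function x^μ with g. -/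
/-!
With the physicists' normalisation, `∫ h(y) e^{i⟨k,y⟩} dy = 𝓕h(-k/2π)`. Fourier inversion at `0`
gives `∫ 𝓕h = h(0)`, and `⟨w,u⟩ 𝓕h(w) = (2πi)⁻¹ 𝓕(∂_u h)(w)` turns the linear weight into a
directional derivative; after rescaling, `(2π)^{-D} ∫ (c + ⟨k,u⟩) ∫ h(y) e^{i⟨k,y⟩} dy dk
= c h(0) + i ∂_u h(0)`, both integrals converging because everything in sight is Schwartz.

For `x^μ ⋆ g` take `h = g(x + ·)` and `u = ½Θ_{μ·}`. For `g ⋆ x^μ` take `h = g(x + ½Θ ·)`, which is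
Schwartz because `Θ` is invertible, and `u = e_μ`; then `∂_u h(0) = ½ Σ_ν Θ_{νμ} ∂_ν g(x)`, and
antisymmetry of `Θ` produces the minus sign. Fourier inversion in Mathlib lives on inner product
spaces, so integrals over `Fin D → ℝ` are moved to `EuclideanSpace ℝ (Fin D)`.
-/

open MeasureTheory Matrix

/-- Integrand of `x^μ ⋆ g` (inner integral over `y`, outer over `k`). -/
noncomputable def moyalCoordLeft {D : ℕ} (Θ : Matrix (Fin D) (Fin D) ℝ)
    (g : SchwartzMap (Fin D → ℝ) ℂ) (x : Fin D → ℝ) (μ : Fin D)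
    (k y : Fin D → ℝ) : ℂ :=
  ((x μ + 2⁻¹ * Θ.mulVec k μ : ℝ) : ℂ) * g (x + y) *
    Complex.exp (Complex.I * ((∑ i, k i * y i : ℝ) : ℂ))

/-- Integrand of `g ⋆ x^μ` (inner integral over `k`, outer over `y`). -/
noncomputable def moyalCoordRight {D : ℕ} (Θ : Matrix (Fin D) (Fin D) ℝ)
    (g : SchwartzMap (Fin D → ℝ) ℂ) (x : Fin D → ℝ) (μ : Fin D)
    (y k : Fin D → ℝ) : ℂ :=
  (((x + y) μ : ℝ) : ℂ) * g (x + (2⁻¹ : ℝ) • Θ.mulVec k) *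
    Complex.exp (Complex.I * ((∑ i, k i * y i : ℝ) : ℂ))

open Real SchwartzMap LineDeriv Complex FourierTransform
open scoped FourierTransform RealInnerProductSpace

section Fourier

variable {V : Type*} [NormedAddCommGroup V] [InnerProductSpace ℝ V] [FiniteDimensional ℝ V]
  [MeasurableSpace V] [BorelSpace V]

theorem SchwartzMap.integral_fourier {E : Type*} [NormedAddCommGroup E] [NormedSpace ℂ E]
    [CompleteSpace E] (f : 𝓢(V, E)) : ∫ w, 𝓕 f w = f 0 :=
  calc ∫ w, 𝓕 f w = 𝓕⁻ (𝓕 f) 0 := by rw [fourierInv_coe, Real.fourierInv_eq]; simp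
    _ = f 0 := by rw [fourierInv_fourier_eq]

theorem SchwartzMap.affine_mul_fourier_eq (f : 𝓢(V, ℂ)) (c : ℂ) (u w : V) :
    (c + ⟪w, u⟫) * 𝓕 f w = 𝓕 (c • f + (2 * π * I)⁻¹ • ∂_{u} f) w := by
  have hu : (inner ℝ · u).HasTemperateGrowth := ((innerSL ℝ).flip u).hasTemperateGrowth
  rw [FourierAdd.fourier_add, FourierSMul.fourier_smul, FourierSMul.fourier_smul,
    fourier_lineDerivOp_eq]
  simp only [_root_.add_apply, _root_.smul_apply, smulLeftCLM_apply_apply hu, smul_eq_mul]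
  field_simp
  simp [fourier_coe]
  ring

theorem SchwartzMap.integrable_affine_mul_fourier (f : 𝓢(V, ℂ)) (c : ℂ) (u : V) :
    Integrable fun w => (c + ⟪w, u⟫) * 𝓕 f w := by
  simp only [affine_mul_fourier_eq]
  exact SchwartzMap.integrable _

theorem SchwartzMap.integral_affine_mul_fourier (f : 𝓢(V, ℂ)) (c : ℂ) (u : V) :
    ∫ w, (c + ⟪w, u⟫) * 𝓕 f w = c * f 0 + (2 * π * I)⁻¹ * fderiv ℝ f 0 u := by
  simp only [affine_mul_fourier_eq, integral_fourier]
  simp [lineDerivOp_apply_eq_fderiv]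

theorem SchwartzMap.integral_mul_cexp_inner (f : 𝓢(V, ℂ)) (k : V) :
    ∫ v, f v * cexp (I * ⟪v, k⟫) = 𝓕 f ((-(2 * π))⁻¹ • k) := by
  rw [fourier_coe, Real.fourier_eq']
  congr 1 with v
  rw [real_inner_smul_right, smul_eq_mul, mul_comm]
  congr 2
  push_cast
  field_simp

theorem SchwartzMap.affine_mul_integral_cexp_eq (f : 𝓢(V, ℂ)) (c : ℂ) (u k : V) :
    (c + ⟪k, u⟫) * ∫ v, f v * cexp (I * ⟪v, k⟫)
      = (c + ⟪(-(2 * π))⁻¹ • k, -(2 * π) • u⟫) * 𝓕 f ((-(2 * π))⁻¹ • k) := by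
  rw [integral_mul_cexp_inner, real_inner_smul_left, real_inner_smul_right]
  congr 3
  field_simp

theorem SchwartzMap.integrable_affine_mul_integral_cexp (f : 𝓢(V, ℂ)) (c : ℂ) (u : V) :
    Integrable fun k => (c + ⟪k, u⟫) * ∫ v, f v * cexp (I * ⟪v, k⟫) := by
  simp only [affine_mul_integral_cexp_eq]
  exact (integrable_affine_mul_fourier f c _).comp_smul
    (f := fun w => (c + ⟪w, -(2 * π) • u⟫) * 𝓕 f w) (by simp [Real.pi_ne_zero])

theorem SchwartzMap.integral_affine_mul_integral_cexp (f : 𝓢(V, ℂ)) (c : ℂ) (u : V) :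
    ((2 * π) ^ Module.finrank ℝ V)⁻¹ • ∫ k, (c + ⟪k, u⟫) * ∫ v, f v * cexp (I * ⟪v, k⟫)
      = c * f 0 + I * fderiv ℝ f 0 u := by
  have hsubst := Measure.integral_comp_inv_smul volume
    (fun w => (c + ⟪w, -(2 * π) • u⟫) * 𝓕 f w) (-(2 * π))
  have hscale :
      ((2 * π) ^ Module.finrank ℝ V)⁻¹ * |(-(2 * π)) ^ Module.finrank ℝ V| = 1 := by
    rw [abs_pow, abs_neg, abs_of_pos two_pi_pos, inv_mul_cancel₀ (by positivity)]
  simp only [affine_mul_integral_cexp_eq]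
  rw [hsubst, smul_smul, hscale, one_smul, integral_affine_mul_fourier, map_smul,
    Complex.real_smul]
  field_simp
  push_cast
  linear_combination (-2 * π * fderiv ℝ f 0 u) * I_sq

end Fourier

section Affine

variable {E F G : Type*} [NormedAddCommGroup E] [NormedSpace ℝ E]
  [NormedAddCommGroup F] [NormedSpace ℝ F] [NormedAddCommGroup G] [NormedSpace ℝ G]

noncomputable def SchwartzMap.compAffine (f : 𝓢(F, G)) (x : F) (A : E ≃L[ℝ] F) : 𝓢(E, G) :=
  compCLMOfContinuousLinearEquiv ℝ A (compSubConstCLM ℝ (-x) f)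

@[simp]
theorem SchwartzMap.compAffine_apply (f : 𝓢(F, G)) (x : F) (A : E ≃L[ℝ] F) (v : E) :
    f.compAffine x A v = f (x + A v) := by
  simp [compAffine, add_comm]

theorem SchwartzMap.fderiv_compAffine_zero (f : 𝓢(F, G)) (x : F) (A : E ≃L[ℝ] F) (u : E) :
    fderiv ℝ (f.compAffine x A) 0 u = fderiv ℝ f x (A u) := by
  have hA : HasFDerivAt (fun v => x + A v) (A : E →L[ℝ] F) 0 := A.hasFDerivAt.const_add x
  have hf : HasFDerivAt f (fderiv ℝ f x) (x + A 0) := by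
    simpa using (f.differentiableAt (x := x)).hasFDerivAt
  have hcomp : ⇑(f.compAffine x A) = f ∘ fun v => x + A v := by
    ext v
    simp
  rw [hcomp, (hf.comp 0 hA).fderiv]
  rfl

end Affine

theorem ContinuousLinearMap.apply_eq_sum_mul_single {ι : Type*} [Fintype ι] [DecidableEq ι]
    (L : (ι → ℝ) →L[ℝ] ℂ) (v : ι → ℝ) : L v = ∑ i, (v i : ℂ) * L (Pi.single i 1) := by
  conv_lhs => rw [pi_eq_sum_univ' v]
  simp [Complex.real_smul]

theorem Matrix.exists_continuousLinearEquiv_mulVec {n : Type*} [Fintype n] [DecidableEq n]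
    {M : Matrix n n ℝ} (hM : IsUnit M) : ∃ A : (n → ℝ) ≃L[ℝ] (n → ℝ), ∀ v, A v = M *ᵥ v :=
  ⟨(M.toLinearEquiv' hM.invertible).toContinuousLinearEquiv, toLin'_apply M⟩

section DotProduct

variable {ι : Type*} [Fintype ι]

theorem EuclideanSpace.integral_comp_ofLp {E : Type*} [NormedAddCommGroup E] [NormedSpace ℝ E]
    (g : (ι → ℝ) → E) : ∫ v : EuclideanSpace ℝ ι, g v.ofLp = ∫ y, g y :=
  (EuclideanSpace.volume_preserving_symm_measurableEquiv_toLp ι).integral_comp' g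

theorem EuclideanSpace.integrable_comp_ofLp_iff {E : Type*} [NormedAddCommGroup E]
    {g : (ι → ℝ) → E} : Integrable (fun v : EuclideanSpace ℝ ι => g v.ofLp) ↔ Integrable g :=
  (EuclideanSpace.volume_preserving_symm_measurableEquiv_toLp ι).integrable_comp_emb
    (MeasurableEquiv.measurableEmbedding _)

theorem SchwartzMap.integrable_affine_mul_cexp_dotProduct (f : 𝓢(ι → ℝ, ℂ)) (c : ℝ)
    (u k : ι → ℝ) :
    Integrable fun y => ((c + k ⬝ᵥ u : ℝ) : ℂ) * f y * cexp (I * ((k ⬝ᵥ y : ℝ) : ℂ)) :=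
  (f.integrable.const_mul _).mul_bdd (by fun_prop) (c := 1)
    (.of_forall fun _ => (norm_exp_I_mul_ofReal _).le)

theorem SchwartzMap.integral_affine_mul_cexp_dotProduct (f : 𝓢(ι → ℝ, ℂ)) (c : ℝ)
    (u k : ι → ℝ) :
    ∫ y, ((c + k ⬝ᵥ u : ℝ) : ℂ) * f y * cexp (I * ((k ⬝ᵥ y : ℝ) : ℂ))
      = ((c : ℂ) + ⟪WithLp.toLp 2 k, WithLp.toLp 2 u⟫) *
          ∫ v : EuclideanSpace ℝ ι, f.compAffine 0 (PiLp.continuousLinearEquiv 2 ℝ _) v *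
            cexp (I * ⟪v, WithLp.toLp 2 k⟫) := by
  rw [← EuclideanSpace.integral_comp_ofLp, ← integral_const_mul]
  congr 1 with v
  simp [EuclideanSpace.inner_eq_star_dotProduct, dotProduct_comm, mul_assoc,
    PiLp.coe_continuousLinearEquiv]

theorem SchwartzMap.integrable_integral_affine_mul_cexp_dotProduct (f : 𝓢(ι → ℝ, ℂ)) (c : ℝ)
    (u : ι → ℝ) :
    Integrable fun k =>
      ∫ y, ((c + k ⬝ᵥ u : ℝ) : ℂ) * f y * cexp (I * ((k ⬝ᵥ y : ℝ) : ℂ)) := by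
  simp only [integral_affine_mul_cexp_dotProduct]
  rw [← EuclideanSpace.integrable_comp_ofLp_iff]
  exact integrable_affine_mul_integral_cexp _ (c : ℂ) (WithLp.toLp 2 u)

theorem SchwartzMap.integral_integral_affine_mul_cexp_dotProduct (f : 𝓢(ι → ℝ, ℂ)) (c : ℝ)
    (u : ι → ℝ) :
    ((2 * π) ^ Fintype.card ι)⁻¹ •
        ∫ k, ∫ y, ((c + k ⬝ᵥ u : ℝ) : ℂ) * f y * cexp (I * ((k ⬝ᵥ y : ℝ) : ℂ))
      = c * f 0 + I * fderiv ℝ f 0 u := by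
  simp only [integral_affine_mul_cexp_dotProduct]
  rw [← EuclideanSpace.integral_comp_ofLp]
  have h := integral_affine_mul_integral_cexp
    (f.compAffine 0 (PiLp.continuousLinearEquiv 2 ℝ _)) (c : ℂ) (WithLp.toLp 2 u)
  rw [finrank_euclideanSpace] at h
  simpa [fderiv_compAffine_zero, PiLp.coe_continuousLinearEquiv] using h

end DotProduct

section Moyal

variable {D : ℕ} (Θ : Matrix (Fin D) (Fin D) ℝ) (g : 𝓢(Fin D → ℝ, ℂ)) (x : Fin D → ℝ)
  (μ : Fin D)

theorem moyalCoordLeft_eq (k y : Fin D → ℝ) :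
    moyalCoordLeft Θ g x μ k y
      = ((x μ + k ⬝ᵥ ((2⁻¹ : ℝ) • Θ).row μ : ℝ) : ℂ) * g.compAffine x (.refl ℝ _) y *
          cexp (I * ((k ⬝ᵥ y : ℝ) : ℂ)) := by
  simp only [moyalCoordLeft, compAffine_apply, ContinuousLinearEquiv.coe_refl', id]
  congr 3
  simp only [mulVec, dotProduct, Finset.mul_sum, row_apply, Matrix.smul_apply, smul_eq_mul]
  exact congrArg _ (Finset.sum_congr rfl fun _ _ => by ring)

theorem moyalCoordRight_eq {A : (Fin D → ℝ) ≃L[ℝ] (Fin D → ℝ)}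
    (hA : ∀ v, A v = ((2⁻¹ : ℝ) • Θ) *ᵥ v) (y k : Fin D → ℝ) :
    moyalCoordRight Θ g x μ y k
      = ((x μ + y ⬝ᵥ Pi.single μ 1 : ℝ) : ℂ) * g.compAffine x A k *
          cexp (I * ((y ⬝ᵥ k : ℝ) : ℂ)) := by
  simp only [moyalCoordRight, compAffine_apply, hA, smul_mulVec, Pi.add_apply, dotProduct_single,
    mul_one]
  rw [dotProduct_comm y k]
  rfl

end Moyal

theorem stmt6_general (D : ℕ)
    (Θ : Matrix (Fin D) (Fin D) ℝ) (hΘ : IsUnit Θ) (hΘa : Θᵀ = -Θ)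
    (g : SchwartzMap (Fin D → ℝ) ℂ) (x : Fin D → ℝ) (μ : Fin D) :
    (∀ k, Integrable (fun y => moyalCoordLeft Θ g x μ k y)) ∧
    Integrable (fun k => ∫ y, moyalCoordLeft Θ g x μ k y) ∧
    (((2 * Real.pi) ^ D)⁻¹ : ℝ) • (∫ k, ∫ y, moyalCoordLeft Θ g x μ k y)
      = ((x μ : ℝ) : ℂ) * g x
        + Complex.I / 2 * ∑ ν, ((Θ μ ν : ℝ) : ℂ) * fderiv ℝ (⇑g) x (Pi.single ν 1) ∧
    (∀ y, Integrable (fun k => moyalCoordRight Θ g x μ y k)) ∧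
    Integrable (fun y => ∫ k, moyalCoordRight Θ g x μ y k) ∧
    (((2 * Real.pi) ^ D)⁻¹ : ℝ) • (∫ y, ∫ k, moyalCoordRight Θ g x μ y k)
      = ((x μ : ℝ) : ℂ) * g x
        - Complex.I / 2 * ∑ ν, ((Θ μ ν : ℝ) : ℂ) * fderiv ℝ (⇑g) x (Pi.single ν 1) := by
  obtain ⟨A, hA⟩ :=
    exists_continuousLinearEquiv_mulVec (hΘ.smul (Units.mk0 (2⁻¹ : ℝ) (by norm_num)))
  have hcolumn : A (Pi.single μ 1) = -((2⁻¹ : ℝ) • Θ).row μ := by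
    rw [hA, mulVec_single_one, ← row_transpose, transpose_smul, hΘa, smul_neg]
    rfl
  have hrow : I * fderiv ℝ g x (((2⁻¹ : ℝ) • Θ).row μ)
      = I / 2 * ∑ ν, (Θ μ ν : ℂ) * fderiv ℝ g x (Pi.single ν 1) := by
    rw [ContinuousLinearMap.apply_eq_sum_mul_single, Finset.mul_sum, Finset.mul_sum]
    exact Finset.sum_congr rfl fun ν _ => by simp; ring
  have hL := integral_integral_affine_mul_cexp_dotProduct (g.compAffine x (.refl ℝ _)) (x μ)
    (((2⁻¹ : ℝ) • Θ).row μ)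
  have hR := integral_integral_affine_mul_cexp_dotProduct (g.compAffine x A) (x μ)
    (Pi.single μ 1)
  rw [Fintype.card_fin] at hL hR
  simp only [moyalCoordLeft_eq, moyalCoordRight_eq Θ g x μ hA]
  refine ⟨integrable_affine_mul_cexp_dotProduct _ _ _,
    integrable_integral_affine_mul_cexp_dotProduct _ _ _, ?_,
    integrable_affine_mul_cexp_dotProduct _ _ _,
    integrable_integral_affine_mul_cexp_dotProduct _ _ _, ?_⟩
  · rw [hL, compAffine_apply, fderiv_compAffine_zero]
    simp [hrow]
  · rw [hR, compAffine_apply, fderiv_compAffine_zero, hcolumn, map_neg, mul_neg, hrow]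
    simp [sub_eq_add_neg]

/-- the iterated integrals defining `x^μ ⋆ g` and `g ⋆ x^μ` converge, and
`x^μ ⋆ g = x_μ g + (i/2) Σ_ν Θ_{μν} ∂_ν g`, `g ⋆ x^μ = x_μ g − (i/2) Σ_ν Θ_{μν} ∂_ν g`. -/
theorem stmt6 (D : ℕ) (hD : 0 < D) (hDe : Even D)
    (Θ : Matrix (Fin D) (Fin D) ℝ) (hΘ : IsUnit Θ) (hΘa : Θᵀ = -Θ)
    (g : SchwartzMap (Fin D → ℝ) ℂ) (x : Fin D → ℝ) (μ : Fin D) :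
    (∀ k, Integrable (fun y => moyalCoordLeft Θ g x μ k y)) ∧
    Integrable (fun k => ∫ y, moyalCoordLeft Θ g x μ k y) ∧
    (((2 * Real.pi) ^ D)⁻¹ : ℝ) • (∫ k, ∫ y, moyalCoordLeft Θ g x μ k y)
      = ((x μ : ℝ) : ℂ) * g x
        + Complex.I / 2 * ∑ ν, ((Θ μ ν : ℝ) : ℂ) * fderiv ℝ (⇑g) x (Pi.single ν 1) ∧
    (∀ y, Integrable (fun k => moyalCoordRight Θ g x μ y k)) ∧
    Integrable (fun y => ∫ k, moyalCoordRight Θ g x μ y k) ∧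
    (((2 * Real.pi) ^ D)⁻¹ : ℝ) • (∫ y, ∫ k, moyalCoordRight Θ g x μ y k)
      = ((x μ : ℝ) : ℂ) * g x
        - Complex.I / 2 * ∑ ν, ((Θ μ ν : ℝ) : ℂ) * fderiv ℝ (⇑g) x (Pi.single ν 1) :=
  stmt6_general D Θ hΘ hΘa g x μ
end

section
/- Let x, y, z be real numbers with x > 0, y ≥ 0, z ≥ 0 and x + y + z < 1. Then for all real u, v, w: Q(u,v,w) ≥ 0, where Q(u,v,w) = [1/x + 1/(x+z) + 1/(1−x−z) + 1/(1−x−y−z)] u² + [1/(1−x−y−z) − 1/(2(1−y)) − 1/(2(1−y−z))] v² + [1/(x+z) + 1/(1−x−z) + 1/(1−x−y−z) − 1/(2(1−z)) − 1/(2(1−y−z))] w² + (2/(1−x−y−z)) uv + [2/(x+z) + 2/(1−x−z) + 2/(1−x−y−z)] uw + [2/(1−x−y−z) − 1/(1−y−z)] vw. -/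
/-!
Expanding the squares shows that `Q(u,v,w)` equals
`u²/x + (u+w)²/(x+z) + (u+w)²/(1-x-z) + (u+v+w)²/(1-x-y-z)`
`  - ½ v²/(1-y) - ½ w²/(1-z) - ½ (v+w)²/(1-y-z)`.
Each subtracted term has the form `(a-b)²/(p+q)` with `a²/p` and `b²/q` among the four positive
terms, so the Engel form of Cauchy–Schwarz, `(a-b)²/(p+q) ≤ a²/p + b²/q`, bounds the three of
them together by the positive part.
-/

theorem sq_div_le_of_sub_eq {K : Type*} [Field K] [LinearOrder K] [IsStrictOrderedRing K]
    {p q r a b c : K} (hp : 0 < p) (hq : 0 < q) (hc : a - b = c) (hr : p + q = r) :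
    c ^ 2 / r ≤ a ^ 2 / p + b ^ 2 / q := by
  subst hc hr
  simpa [Fin.sum_univ_two, sub_eq_add_neg] using
    Finset.sq_sum_div_le_sum_sq_div Finset.univ ![a, -b] (g := ![p, q])
      (by simp [hp, hq, Fin.forall_fin_two])

/-- positive semidefiniteness of the quadratic form `Q` (the negative
Hessian form of the exponent function `g`) on the open simplex
`x > 0, y ≥ 0, z ≥ 0, x + y + z < 1`. -/
theorem stmt14 (x y z : ℝ) (hx : 0 < x) (hy : 0 ≤ y) (hz : 0 ≤ z)
    (hs : x + y + z < 1) (u v w : ℝ) :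
    0 ≤ (1 / x + 1 / (x + z) + 1 / (1 - x - z) + 1 / (1 - x - y - z)) * u ^ 2
      + (1 / (1 - x - y - z) - 1 / (2 * (1 - y)) - 1 / (2 * (1 - y - z))) * v ^ 2
      + (1 / (x + z) + 1 / (1 - x - z) + 1 / (1 - x - y - z)
          - 1 / (2 * (1 - z)) - 1 / (2 * (1 - y - z))) * w ^ 2
      + (2 / (1 - x - y - z)) * u * v
      + (2 / (x + z) + 2 / (1 - x - z) + 2 / (1 - x - y - z)) * u * w
      + (2 / (1 - x - y - z) - 1 / (1 - y - z)) * v * w := by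
  have hxz : 0 < x + z := by linarith
  have hxz' : 0 < 1 - x - z := by linarith
  have hxyz : 0 < 1 - x - y - z := by linarith
  have hvw : (v + w) ^ 2 / (1 - y - z) ≤ (u + v + w) ^ 2 / (1 - x - y - z) + u ^ 2 / x :=
    sq_div_le_of_sub_eq hxyz hx (by ring) (by ring)
  have hv : v ^ 2 / (1 - y) ≤ (u + v + w) ^ 2 / (1 - x - y - z) + (u + w) ^ 2 / (x + z) :=
    sq_div_le_of_sub_eq hxyz hxz (by ring) (by ring)
  have hw : w ^ 2 / (1 - z) ≤ (u + w) ^ 2 / (1 - x - z) + u ^ 2 / x :=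
    sq_div_le_of_sub_eq hxz' hx (by ring) (by ring)
  have hrest : 0 ≤ (u + w) ^ 2 / (x + z) + (u + w) ^ 2 / (1 - x - z) := by positivity
  -- `ring` treats `(2 * t)⁻¹` as an atom unless it is first split as `2⁻¹ * t⁻¹`.
  simp only [one_div, mul_inv]
  linear_combination (hvw + hv + hw + hrest) / 2
end

section
/- Let C > 0 and define, for natural numbers m, h, p with u ≤ m, A(m, m+p, h, u) = √(m!(m+h)!(m+p)!(m+p+h)!)/((m−u)!(m+p−u)!(h+u)!u!) and, for α ∈ (0,1), Γ^α(m,h,p) = (√(1−α)/(1+Cα))^{2m+p} (1+Cα)^{−h} Σ_{u=0}^{m} ( α√(C(1+C))/√(1−α) )^{2m+p−2u} A(m, m+p, h, u). Then there exist constants K > 0 and c > 0, depending only on C, such that for all α ∈ (0,1) satisfying √(C(C+1)) ≤ ½√(1−α) and all m, h, p ∈ ℕ with α(m+h+p) ≤ 1, one has Γ^α(m,h,p) ≤ K e^{−c(α(m+h+p) + p)}. -/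
/-!
Write `k = m + h + p`. Each of the four factorials under the square root in `A(m, m+p, h, u)` is
at most `u!` or `(h+u)!` times a power of `k`, so `A(m, m+p, h, u) ≤ k^(2m+p-2u)`. The condition on
`α` gives `α√(C(1+C))/√(1-α) ≤ α/2`, so when `αk ≤ 1` the `u`-th term of the sum is at most
`2^-(2(m-u)+p)` and the sum is at most `2 · 2^-p`. The prefactors are at most `1`, and since
`αk ≤ 1` the factor `e^(-cαk)` is at least `e^(-c)` and is absorbed into `K`.
-/

/-- The combinatorial coefficient
`A(m,l,h,u) = √(m!(m+h)!l!(l+h)!)/((m−u)!(l−u)!(h+u)!u!)`. -/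
noncomputable def Acoef (m l h u : ℕ) : ℝ :=
  Real.sqrt ((m.factorial * (m + h).factorial * l.factorial * (l + h).factorial : ℕ)) /
    (((m - u).factorial * (l - u).factorial * (h + u).factorial * u.factorial : ℕ) : ℝ)

/-- The matrix-basis kernel
`Γ^α(m,h,p) = (√(1−α)/(1+Cα))^{2m+p} (1+Cα)^{−h}
  Σ_{u=0}^{m} (α√(C(1+C))/√(1−α))^{2m+p−2u} A(m, m+p, h, u)`. -/
noncomputable def GammaSlice (C α : ℝ) (m h p : ℕ) : ℝ :=
  (Real.sqrt (1 - α) / (1 + C * α)) ^ (2 * m + p) * ((1 + C * α) ^ h)⁻¹ *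
    ∑ u ∈ Finset.range (m + 1),
      (α * Real.sqrt (C * (1 + C)) / Real.sqrt (1 - α)) ^ (2 * m + p - 2 * u) *
        Acoef m (m + p) h u

open Nat Finset

theorem Nat.factorial_le_factorial_mul_pow {i j n k : ℕ} (hn : i + j = n) (hk : n ≤ k) :
    n ! ≤ i ! * k ^ j := by
  subst hn
  calc (i + j)! = (i + j - j)! * (i + j).descFactorial j :=
        (factorial_mul_descFactorial (Nat.le_add_left j i)).symm
    _ ≤ i ! * k ^ j := by
        rw [Nat.add_sub_cancel]
        exact Nat.mul_le_mul_left _ ((descFactorial_le_pow _ _).trans (Nat.pow_le_pow_left hk _))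

theorem factorial_prod_le_sq {m h p u : ℕ} (hu : u ≤ m) :
    m ! * (m + h)! * (m + p)! * (m + p + h)! ≤
      ((m + h + p) ^ (2 * m + p - 2 * u) * ((m - u)! * (m + p - u)! * (h + u)! * u !)) ^ 2 := by
  set k := m + h + p
  have h₁ : m ! ≤ u ! * k ^ (m - u) := factorial_le_factorial_mul_pow (by omega) (by omega)
  have h₂ : (m + h)! ≤ (h + u)! * k ^ (m - u) := factorial_le_factorial_mul_pow (by omega) (by omega)
  have h₃ : (m + p)! ≤ u ! * k ^ (m + p - u) := factorial_le_factorial_mul_pow (by omega) (by omega)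
  have h₄ : (m + p + h)! ≤ (h + u)! * k ^ (m + p - u) :=
    factorial_le_factorial_mul_pow (by omega) (by omega)
  have hD : (h + u)! * u ! ≤ (m - u)! * (m + p - u)! * (h + u)! * u ! := by
    rw [mul_assoc _ (h + u)!]
    exact Nat.le_mul_of_pos_left _ (by positivity)
  calc m ! * (m + h)! * (m + p)! * (m + p + h)!
      ≤ (u ! * k ^ (m - u)) * ((h + u)! * k ^ (m - u)) *
          (u ! * k ^ (m + p - u)) * ((h + u)! * k ^ (m + p - u)) := by gcongr
    _ = (k ^ ((m - u) + (m + p - u)) * ((h + u)! * u !)) ^ 2 := by ring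
    _ ≤ _ := by
        rw [show (m - u) + (m + p - u) = 2 * m + p - 2 * u by omega]
        gcongr

theorem Acoef_le_pow {m h p u : ℕ} (hu : u ≤ m) :
    Acoef m (m + p) h u ≤ ((m + h + p : ℕ) : ℝ) ^ (2 * m + p - 2 * u) := by
  have hD : (0 : ℝ) < ((m - u)! * (m + p - u)! * (h + u)! * u ! : ℕ) := by positivity
  rw [Acoef, div_le_iff₀ hD, Real.sqrt_le_left (by positivity)]
  exact_mod_cast factorial_prod_le_sq hu


theorem sum_range_inv_two_pow_le (m p : ℕ) :
    ∑ u ∈ range (m + 1), (2⁻¹ : ℝ) ^ (2 * m + p - 2 * u) ≤ 2 * 2⁻¹ ^ p := by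
  have hsplit : ∀ u ∈ range (m + 1),
      (2⁻¹ : ℝ) ^ (2 * m + p - 2 * u) = 4⁻¹ ^ (m + 1 - 1 - u) * 2⁻¹ ^ p := by
    intro u hu
    rw [mem_range] at hu
    rw [show 2 * m + p - 2 * u = 2 * (m + 1 - 1 - u) + p by omega, pow_add, pow_mul]
    norm_num
  rw [sum_congr rfl hsplit, ← sum_mul, sum_range_reflect (fun u ↦ (4⁻¹ : ℝ) ^ u)]
  gcongr
  calc ∑ u ∈ range (m + 1), (4⁻¹ : ℝ) ^ u ≤ 1 / (1 - 4⁻¹) := by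
        simpa using geom_sum_Ico_le_of_lt_one (x := (4⁻¹ : ℝ)) (m := 0) (n := m + 1)
          (by norm_num) (by norm_num)
    _ ≤ 2 := by norm_num

theorem pow_mul_Acoef_le {β : ℝ} {m h p u : ℕ} (hβ : 0 ≤ β)
    (hβk : β * ((m + h + p : ℕ) : ℝ) ≤ 2⁻¹) (hu : u ≤ m) :
    β ^ (2 * m + p - 2 * u) * Acoef m (m + p) h u ≤ 2⁻¹ ^ (2 * m + p - 2 * u) :=
  calc β ^ (2 * m + p - 2 * u) * Acoef m (m + p) h u
      ≤ β ^ (2 * m + p - 2 * u) * ((m + h + p : ℕ) : ℝ) ^ (2 * m + p - 2 * u) := by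
        gcongr
        exact Acoef_le_pow hu
    _ ≤ 2⁻¹ ^ (2 * m + p - 2 * u) := by
        rw [← mul_pow]
        gcongr

theorem GammaSlice_le_two_mul_inv_two_pow {C α : ℝ} (hC : 0 ≤ C) (hα : 0 ≤ α) (hα1 : α < 1)
    (hsd : Real.sqrt (C * (C + 1)) ≤ 2⁻¹ * Real.sqrt (1 - α)) {m h p : ℕ}
    (hk : α * ((m : ℝ) + h + p) ≤ 1) :
    GammaSlice C α m h p ≤ 2 * 2⁻¹ ^ p := by
  set β := α * Real.sqrt (C * (1 + C)) / Real.sqrt (1 - α)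
  have hsqrt : 0 < Real.sqrt (1 - α) := Real.sqrt_pos.mpr (by linarith)
  have hβ : 0 ≤ β := by positivity
  have hβk : β * ((m + h + p : ℕ) : ℝ) ≤ 2⁻¹ := by
    have hβα : β ≤ α / 2 := by
      rw [div_le_iff₀ hsqrt, add_comm 1 C]
      nlinarith
    push_cast
    nlinarith
  have hden : 1 ≤ 1 + C * α := by nlinarith
  have hprefactor : (Real.sqrt (1 - α) / (1 + C * α)) ^ (2 * m + p) * ((1 + C * α) ^ h)⁻¹ ≤ 1 := by
    refine mul_le_one₀ (pow_le_one₀ (by positivity) ?_) (by positivity)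
      (inv_le_one_of_one_le₀ (one_le_pow₀ hden))
    rw [div_le_one (by positivity)]
    exact (Real.sqrt_le_one.mpr (by linarith)).trans hden
  have hsum : ∑ u ∈ range (m + 1), β ^ (2 * m + p - 2 * u) * Acoef m (m + p) h u ≤ 2 * 2⁻¹ ^ p :=
    (sum_le_sum fun u hu ↦ pow_mul_Acoef_le hβ hβk (Nat.lt_succ_iff.mp (mem_range.mp hu))).trans
      (sum_range_inv_two_pow_le m p)
  exact (mul_le_of_le_one_left (sum_nonneg fun u _ ↦ by unfold Acoef; positivity)
    hprefactor).trans hsum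

theorem inv_two_pow_le_exp (p : ℕ) : (2⁻¹ : ℝ) ^ p ≤ Real.exp (-(p / 2)) :=
  calc (2⁻¹ : ℝ) ^ p = Real.exp (-Real.log 2) ^ p := by
        rw [Real.exp_neg, Real.exp_log two_pos]
    _ ≤ Real.exp (-(1 / 2)) ^ p := by
        gcongr
        linarith [Real.log_two_gt_d9]
    _ = Real.exp (-(p / 2)) := by
        rw [← Real.exp_nat_mul]
        ring_nf

/-- there are constants `K, c > 0` depending only on `C` such that for all
`α ∈ (0,1)` with `√(C(C+1)) ≤ ½√(1−α)` and all `m, h, p` with `α(m+h+p) ≤ 1`,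
`Γ^α(m,h,p) ≤ K e^{−c(α(m+h+p) + p)}`. -/
theorem stmt16 (C : ℝ) (hC : 0 < C) :
    ∃ K > (0 : ℝ), ∃ c > (0 : ℝ), ∀ α : ℝ, 0 < α → α < 1 →
      Real.sqrt (C * (C + 1)) ≤ 2⁻¹ * Real.sqrt (1 - α) →
      ∀ m h p : ℕ, α * ((m : ℝ) + (h : ℝ) + (p : ℝ)) ≤ 1 →
        GammaSlice C α m h p ≤
          K * Real.exp (-(c * (α * ((m : ℝ) + (h : ℝ) + (p : ℝ)) + (p : ℝ)))) := by
  refine ⟨2 * Real.exp (1 / 2), by positivity, 1 / 2, by norm_num, ?_⟩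
  intro α hα hα1 hsd m h p hk
  calc GammaSlice C α m h p ≤ 2 * 2⁻¹ ^ p :=
        GammaSlice_le_two_mul_inv_two_pow hC.le hα.le hα1 hsd hk
    _ ≤ 2 * Real.exp (-(p / 2)) := by gcongr; exact inv_two_pow_le_exp p
    _ ≤ 2 * Real.exp (1 / 2) * Real.exp (-(1 / 2 * (α * ((m : ℝ) + h + p) + p))) := by
        rw [mul_assoc, ← Real.exp_add]
        gcongr
        linarith
end

section
/- For every x ∈ ℝ^D and all Schwartz functions f, g : ℝ^D → ℂ, the two integral representations of the Moyal product agree: (2π)^{−D} ∫_{ℝ^D} ∫_{ℝ^D} f(x + ½Θk) g(x+y) e^{i⟨k,y⟩} dy dk = (1/(π^D |det Θ|)) ∫_{ℝ^D} ∫_{ℝ^D} f(x+y) g(x+z) e^{−2i⟨y, Θ^{−1}z⟩} dz dy, and both double integrals converge absolutely. -/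
/-!
Substitute `k = 2Θ⁻¹y` in the outer integral. Then `½Θk = y`, and antisymmetry of `Θ⁻¹` gives
`⟨2Θ⁻¹y, z⟩ = -2⟨y, Θ⁻¹z⟩`, so the integrands match; the Jacobian `|det 2Θ⁻¹| = 2^D / |det Θ|`
turns `(2π)^{-D}` into `(π^D |det Θ|)⁻¹`. Both integrands are dominated by `|F(k)| |G(y)|` with
`F`, `G` integrable, since the phase factors are unimodular.
-/

open MeasureTheory Matrix

namespace MeasureTheory

section LinearChangeOfVariables

variable {E F : Type*} [NormedAddCommGroup E] [NormedSpace ℝ E] [MeasurableSpace E] [BorelSpace E]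
  [FiniteDimensional ℝ E] (μ : Measure E) [μ.IsAddHaarMeasure]
  [NormedAddCommGroup F] {f : E →ₗ[ℝ] E}

theorem integral_comp_linearMap [NormedSpace ℝ F] (hf : LinearMap.det f ≠ 0) (φ : E → F) :
    ∫ x, φ (f x) ∂μ = |(LinearMap.det f)⁻¹| • ∫ y, φ y ∂μ := by
  let e := (f.equivOfDetNeZero hf).toContinuousLinearEquiv.toHomeomorph.toMeasurableEquiv
  have h := integral_map_equiv (μ := μ) e φ
  rwa [show ⇑e = f from rfl, Measure.map_linearMap_addHaar_eq_smul_addHaar μ hf,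
    integral_smul_measure, ENNReal.toReal_ofReal (abs_nonneg _), eq_comm] at h

theorem Integrable.comp_linearMap (hf : LinearMap.det f ≠ 0) {φ : E → F} (hφ : Integrable φ μ) :
    Integrable (fun x => φ (f x)) μ := by
  let e := (f.equivOfDetNeZero hf).toContinuousLinearEquiv.toHomeomorph.toMeasurableEquiv
  refine (integrable_map_equiv e φ).1 ?_
  rw [show ⇑e = f from rfl, Measure.map_linearMap_addHaar_eq_smul_addHaar μ hf]
  exact hφ.smul_measure ENNReal.ofReal_ne_top

end LinearChangeOfVariables

section MatrixChangeOfVariables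

variable {ι F : Type*} [Fintype ι] [DecidableEq ι] [NormedAddCommGroup F] {A : Matrix ι ι ℝ}

theorem integral_eq_abs_det_smul_integral_comp_mulVec [NormedSpace ℝ F] (hA : A.det ≠ 0)
    (φ : (ι → ℝ) → F) : ∫ y, φ y = |A.det| • ∫ x, φ (A *ᵥ x) := by
  rw [← LinearMap.det_toLin'] at hA ⊢
  have h := integral_comp_linearMap volume hA φ
  simp only [toLin'_apply] at h
  rw [h, smul_smul, abs_inv, mul_inv_cancel₀ (abs_ne_zero.2 hA), one_smul]

theorem Integrable.comp_mulVec (hA : A.det ≠ 0) {φ : (ι → ℝ) → F} (hφ : Integrable φ) :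
    Integrable (fun x => φ (A *ᵥ x)) := by
  rw [← LinearMap.det_toLin'] at hA
  exact hφ.comp_linearMap volume hA

end MatrixChangeOfVariables

theorem Integrable.mul_prod_mul_exp {α β : Type*} [MeasurableSpace α] [MeasurableSpace β]
    {μ : Measure α} {ν : Measure β} [SFinite ν] {F : α → ℂ} {G : β → ℂ} {φ : α × β → ℂ}
    (hF : Integrable F μ) (hG : Integrable G ν) (hφ : Measurable φ) (hφ_re : ∀ p, (φ p).re = 0) :
    Integrable (fun p => F p.1 * G p.2 * Complex.exp (φ p)) (μ.prod ν) :=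
  (hF.mul_prod hG).mul_bdd (c := 1) (by fun_prop) <| ae_of_all _ fun p => by
    rw [Complex.norm_exp, hφ_re, Real.exp_zero]

end MeasureTheory

namespace Matrix

variable {ι R : Type*} [Fintype ι] [CommRing R] {A : Matrix ι ι R}

theorem mulVec_dotProduct_of_transpose_eq_neg (hA : Aᵀ = -A) (v w : ι → R) :
    A *ᵥ v ⬝ᵥ w = -(v ⬝ᵥ A *ᵥ w) := by
  rw [← vecMul_transpose, ← dotProduct_mulVec, hA, neg_mulVec, dotProduct_neg]

theorem transpose_nonsing_inv_of_transpose_eq_neg [DecidableEq ι] (hA : Aᵀ = -A)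
    (h : IsUnit A.det) : A⁻¹ᵀ = -A⁻¹ := by
  rw [transpose_nonsing_inv, hA]
  exact inv_eq_right_inv (by rw [neg_mul_neg, mul_nonsing_inv A h])

end Matrix

theorem inv_two_pi_pow_mul_abs_det_two_smul_inv {D : ℕ} (Θ : Matrix (Fin D) (Fin D) ℝ) :
    ((2 * Real.pi) ^ D)⁻¹ * |((2 : ℝ) • Θ⁻¹).det| = (Real.pi ^ D * |Θ.det|)⁻¹ := by
  rw [det_smul, det_nonsing_inv, Ring.inverse_eq_inv', Fintype.card_fin, abs_mul, abs_pow, abs_two,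
    abs_inv, mul_pow, mul_inv, mul_inv, mul_mul_mul_comm, inv_mul_cancel₀ (by positivity), one_mul]

theorem stmt18_general (D : ℕ)
    (Θ : Matrix (Fin D) (Fin D) ℝ) (hΘ : IsUnit Θ) (hΘa : Θᵀ = -Θ)
    (f g : SchwartzMap (Fin D → ℝ) ℂ) (x : Fin D → ℝ) :
    Integrable (fun p : (Fin D → ℝ) × (Fin D → ℝ) =>
      f (x + (2⁻¹ : ℝ) • Θ.mulVec p.1) * g (x + p.2) *
        Complex.exp (Complex.I * ((∑ i, p.1 i * p.2 i : ℝ) : ℂ))) ∧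
    Integrable (fun p : (Fin D → ℝ) × (Fin D → ℝ) =>
      f (x + p.1) * g (x + p.2) *
        Complex.exp (-(2 * Complex.I * ((∑ i, p.1 i * (Θ⁻¹.mulVec p.2) i : ℝ) : ℂ)))) ∧
    (((2 * Real.pi) ^ D)⁻¹ : ℝ) •
        (∫ k : Fin D → ℝ, ∫ y : Fin D → ℝ,
          f (x + (2⁻¹ : ℝ) • Θ.mulVec k) * g (x + y) *
            Complex.exp (Complex.I * ((∑ i, k i * y i : ℝ) : ℂ)))
      = ((Real.pi ^ D * |Θ.det|)⁻¹ : ℝ) •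
          (∫ y : Fin D → ℝ, ∫ z : Fin D → ℝ,
            f (x + y) * g (x + z) *
              Complex.exp (-(2 * Complex.I * ((∑ i, y i * (Θ⁻¹.mulVec z) i : ℝ) : ℂ)))) := by
  have hdet : IsUnit Θ.det := (isUnit_iff_isUnit_det Θ).mp hΘ
  have hf : Integrable fun v => f (x + v) := f.integrable.comp_add_left x
  have hg : Integrable fun v => g (x + v) := g.integrable.comp_add_left x
  refine ⟨?_, ?_, ?_⟩
  · have hhalf : ((2⁻¹ : ℝ) • Θ).det ≠ 0 := by simp [hdet.ne_zero]
    have hf' : Integrable fun k => f (x + (2⁻¹ : ℝ) • Θ *ᵥ k) := by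
      simpa only [smul_mulVec] using hf.comp_mulVec hhalf
    refine (hf'.mul_prod_mul_exp hg ?_ fun p => ?_ :) <;> [fun_prop; simp]
  · refine (hf.mul_prod_mul_exp hg ?_ fun p => ?_ :) <;> [fun_prop; simp]
  have hA : ((2 : ℝ) • Θ⁻¹).det ≠ 0 := by simp [det_nonsing_inv, hdet.ne_zero]
  have hsubst : ∀ y, (2⁻¹ : ℝ) • Θ *ᵥ (((2 : ℝ) • Θ⁻¹) *ᵥ y) = y := fun y => by
    rw [smul_mulVec, mulVec_smul, mulVec_mulVec, mul_nonsing_inv Θ hdet, one_mulVec, smul_smul,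
      inv_mul_cancel₀ two_ne_zero, one_smul]
  have hphase : ∀ y z, ((2 : ℝ) • Θ⁻¹) *ᵥ y ⬝ᵥ z = -(2 * (y ⬝ᵥ Θ⁻¹ *ᵥ z)) := fun y z => by
    rw [smul_mulVec, smul_dotProduct, smul_eq_mul,
      mulVec_dotProduct_of_transpose_eq_neg (transpose_nonsing_inv_of_transpose_eq_neg hΘa hdet),
      mul_neg]
  rw [integral_eq_abs_det_smul_integral_comp_mulVec hA, smul_smul,
    inv_two_pi_pow_mul_abs_det_two_smul_inv]
  congr 2 with y
  congr 1 with z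
  simp only [← dotProduct.eq_1]
  rw [hsubst, hphase]
  push_cast
  congr 2
  ring

/-- the two integral representations of the Moyal product agree:
`(2π)^{−D} ∫∫ f(x+½Θk) g(x+y) e^{i⟨k,y⟩} dy dk
  = (1/(π^D|det Θ|)) ∫∫ f(x+y) g(x+z) e^{−2i⟨y,Θ^{−1}z⟩} dz dy`,
and both double integrals converge absolutely. -/
theorem stmt18 (D : ℕ) (hD : 0 < D) (hDe : Even D)
    (Θ : Matrix (Fin D) (Fin D) ℝ) (hΘ : IsUnit Θ) (hΘa : Θᵀ = -Θ)
    (f g : SchwartzMap (Fin D → ℝ) ℂ) (x : Fin D → ℝ) :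
    Integrable (fun p : (Fin D → ℝ) × (Fin D → ℝ) =>
      f (x + (2⁻¹ : ℝ) • Θ.mulVec p.1) * g (x + p.2) *
        Complex.exp (Complex.I * ((∑ i, p.1 i * p.2 i : ℝ) : ℂ))) ∧
    Integrable (fun p : (Fin D → ℝ) × (Fin D → ℝ) =>
      f (x + p.1) * g (x + p.2) *
        Complex.exp (-(2 * Complex.I * ((∑ i, p.1 i * (Θ⁻¹.mulVec p.2) i : ℝ) : ℂ)))) ∧
    (((2 * Real.pi) ^ D)⁻¹ : ℝ) •
        (∫ k : Fin D → ℝ, ∫ y : Fin D → ℝ,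
          f (x + (2⁻¹ : ℝ) • Θ.mulVec k) * g (x + y) *
            Complex.exp (Complex.I * ((∑ i, k i * y i : ℝ) : ℂ)))
      = ((Real.pi ^ D * |Θ.det|)⁻¹ : ℝ) •
          (∫ y : Fin D → ℝ, ∫ z : Fin D → ℝ,
            f (x + y) * g (x + z) *
              Complex.exp (-(2 * Complex.I * ((∑ i, y i * (Θ⁻¹.mulVec z) i : ℝ) : ℂ)))) :=
  stmt18_general D Θ hΘ hΘa f g x
end
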